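/- Let f : D → {0,1} be a partial Boolean function with D ⊆ {0,1}^M and let m ≥ 1 be an integer. Then the threshold degree of GapMaj_{m,2/3}(f) is at most 2 times the (1/20)-approximate degree of f. Consequently, the threshold degree of GapMaj_{m,2/3}(f) is O(adeg_{1/3}(f)). -/
import Mathlib


open MvPolynomial
open scoped Classical

noncomputable section

/-- The real value of a Boolean: `1` for `true`, `0` for `false`. -/
def bval (b : Bool) : ℝ := if b then 1 else 0

/-- Evaluation of a real multilinear polynomial at a Boolean point of `{0,1}^σ`. -/
def pEval {σ : Type*} (p : MvPolynomial σ ℝ) (x : σ → Bool) : ℝ :=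
  MvPolynomial.eval (fun i => bval (x i)) p

/-- `p` approximates the partial Boolean function `f` (with domain `D`) to error `ε`. -/
def ApproxBy {σ : Type*} (D : Set (σ → Bool)) (f : (σ → Bool) → Bool) (ε : ℝ)
    (p : MvPolynomial σ ℝ) : Prop :=
  (∀ x ∈ D, |pEval p x - bval (f x)| ≤ ε) ∧ ∀ x ∉ D, |pEval p x| ≤ 1 + ε

/-- The `ε`-approximate degree of the partial Boolean function `f` with domain `D`. -/
noncomputable def adeg {σ : Type*} (D : Set (σ → Bool)) (f : (σ → Bool) → Bool) (ε : ℝ) : ℕ :=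
  sInf {d | ∃ p : MvPolynomial σ ℝ, ApproxBy D f ε p ∧ p.totalDegree = d}

/-- `p` sign-represents the partial Boolean function `f` with domain `D`. -/
def SignRep {σ : Type*} (D : Set (σ → Bool)) (f : (σ → Bool) → Bool)
    (p : MvPolynomial σ ℝ) : Prop :=
  ∀ x ∈ D, (f x = true → 0 < pEval p x) ∧ (f x = false → pEval p x < 0)

/-- The threshold degree of the partial Boolean function `f` with domain `D`. -/
noncomputable def thrDeg {σ : Type*} (D : Set (σ → Bool)) (f : (σ → Bool) → Bool) : ℕ :=
  sInf {d | ∃ p : MvPolynomial σ ℝ, SignRep D f p ∧ p.totalDegree = d}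

/-- The `i`-th block of an input in `({0,1}^σ)^n`. -/
def block {n : ℕ} {σ : Type*} (x : Fin n × σ → Bool) (i : Fin n) : σ → Bool :=
  fun j => x (i, j)

/-- Number of blocks in the domain of `f` on which `f` evaluates to `1`. -/
def gmYes {n : ℕ} {σ : Type*} (D : Set (σ → Bool)) (f : (σ → Bool) → Bool)
    (x : Fin n × σ → Bool) : ℕ :=
  Nat.card {i : Fin n // block x i ∈ D ∧ f (block x i) = true}

/-- Number of blocks in the domain of `f` on which `f` evaluates to `0`. -/
def gmNo {n : ℕ} {σ : Type*} (D : Set (σ → Bool)) (f : (σ → Bool) → Bool)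
    (x : Fin n × σ → Bool) : ℕ :=
  Nat.card {i : Fin n // block x i ∈ D ∧ f (block x i) = false}

/-- The domain of `GapMaj_{n,ε}(f)`. -/
def gapMajDom {σ : Type*} (D : Set (σ → Bool)) (f : (σ → Bool) → Bool)
    (n : ℕ) (ε : ℝ) : Set (Fin n × σ → Bool) :=
  {x | ε * n ≤ (gmYes D f x : ℝ) ∨ ε * n ≤ (gmNo D f x : ℝ)}

/-- The value function of `GapMaj_{n,ε}(f)` (meaningful on `gapMajDom`). -/
noncomputable def gapMajFun {σ : Type*} (D : Set (σ → Bool)) (f : (σ → Bool) → Bool)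
    (n : ℕ) (ε : ℝ) : (Fin n × σ → Bool) → Bool :=
  fun x => if ε * n ≤ (gmYes D f x : ℝ) then true else false
/-! ### Auxiliary lemmas -/

section Aux

lemma bval_nonneg (z : Bool) : 0 ≤ bval z := by unfold bval; split <;> norm_num
lemma bval_le_one (z : Bool) : bval z ≤ 1 := by unfold bval; split <;> norm_num

lemma pEval_sum {σ : Type*} {ι : Type*} (s : Finset ι) (g : ι → MvPolynomial σ ℝ)
    (x : σ → Bool) : pEval (∑ i ∈ s, g i) x = ∑ i ∈ s, pEval (g i) x := by
  simp [pEval]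

lemma pEval_rename {M : ℕ} (p : MvPolynomial (Fin M) ℝ) {m : ℕ}
    (i : Fin m) (x : Fin m × Fin M → Bool) :
    pEval (rename (Prod.mk i) p) x = pEval p (block x i) := by
  rw [pEval, eval_rename]; rfl

/-- Exact multilinear representation of any total Boolean function. -/
lemma exists_exact {M : ℕ} (f : (Fin M → Bool) → Bool) :
    ∃ p : MvPolynomial (Fin M) ℝ, ∀ x, pEval p x = bval (f x) := by
  classical
  refine ⟨∑ y : Fin M → Bool, C (bval (f y)) * ∏ j, (if y j then X j else 1 - X j), ?_⟩
  intro x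
  rw [pEval_sum]
  have hterm : ∀ y : Fin M → Bool,
      pEval (C (bval (f y)) * ∏ j, (if y j then X j else 1 - X j)) x
      = if y = x then bval (f x) else 0 := by
    intro y
    by_cases h : y = x
    · subst h
      rw [if_pos rfl, pEval, map_mul, eval_C, map_prod]
      have hone : ∀ j : Fin M, eval (fun i => bval (y i)) (if y j then X j else 1 - X j) = 1 := by
        intro j
        cases hy : y j <;> simp [hy, bval]
      rw [Finset.prod_congr rfl (fun j _ => hone j)]
      simp
    · rw [if_neg h, pEval, map_mul, eval_C, map_prod]
      obtain ⟨j, hj⟩ : ∃ j, y j ≠ x j := by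
        by_contra hc
        push_neg at hc
        exact h (funext hc)
      have hz : eval (fun i => bval (x i)) (if y j then X j else 1 - X j) = 0 := by
        cases hy : y j <;> cases hx : x j <;> simp [hy, hx, bval] <;> simp [hy, hx] at hj
      rw [Finset.prod_eq_zero (Finset.mem_univ j) hz, mul_zero]
  rw [Finset.sum_congr rfl (fun y _ => hterm y)]
  simp

lemma exact_approx {M : ℕ} (D : Set (Fin M → Bool)) (f : (Fin M → Bool) → Bool)
    {ε : ℝ} (hε : 0 ≤ ε) {p : MvPolynomial (Fin M) ℝ} (hp : ∀ x, pEval p x = bval (f x)) :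
    ApproxBy D f ε p := by
  constructor
  · intro x _; rw [hp]; simpa using hε
  · intro x _; rw [hp]
    have := bval_nonneg (f x); have := bval_le_one (f x)
    rw [abs_le]; constructor <;> linarith

lemma adeg_attained {M : ℕ} (D : Set (Fin M → Bool)) (f : (Fin M → Bool) → Bool)
    {ε : ℝ} (hε : 0 ≤ ε) :
    ∃ p : MvPolynomial (Fin M) ℝ, ApproxBy D f ε p ∧ p.totalDegree = adeg D f ε := by
  obtain ⟨p0, hp0⟩ := exists_exact f
  have hne : {d | ∃ p : MvPolynomial (Fin M) ℝ, ApproxBy D f ε p ∧ p.totalDegree = d}.Nonempty :=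
    ⟨p0.totalDegree, p0, exact_approx D f hε hp0, rfl⟩
  exact Nat.sInf_mem hne

/-- If `p` approximates `f` to error `ε`, then `|pEval p y| ≤ 1 + ε` everywhere. -/
lemma approx_all_bound {M : ℕ} {D : Set (Fin M → Bool)} {f : (Fin M → Bool) → Bool}
    {ε : ℝ} {p : MvPolynomial (Fin M) ℝ} (hp : ApproxBy D f ε p) (y : Fin M → Bool) :
    |pEval p y| ≤ 1 + ε := by
  by_cases hy : y ∈ D
  · have h1 := hp.1 y hy
    have h2 := bval_nonneg (f y); have h3 := bval_le_one (f y)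
    rw [abs_le] at h1 ⊢; constructor <;> [linarith [h1.1]; linarith [h1.2]]
  · exact hp.2 y hy

end Aux
section SignRepLemma

lemma gm_counts {M m : ℕ} (D : Set (Fin M → Bool)) (f : (Fin M → Bool) → Bool)
    (x : Fin m × Fin M → Bool) (z : Bool) :
    Nat.card {i : Fin m // block x i ∈ D ∧ f (block x i) = z}
      = (Finset.univ.filter (fun i : Fin m => block x i ∈ D ∧ f (block x i) = z)).card := by
  classical
  rw [Nat.card_eq_fintype_card, Fintype.card_subtype]

lemma signrep_blockwise {M m : ℕ} (hm : 1 ≤ m) (D : Set (Fin M → Bool))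
    (f : (Fin M → Bool) → Bool) (p : MvPolynomial (Fin M) ℝ) (φ : ℝ → ℝ)
    (q : MvPolynomial (Fin m × Fin M) ℝ)
    {a a' b b' : ℝ} (ha : 0 < a) (ha' : 0 < a')
    (hb0 : 0 ≤ b) (hb0' : 0 ≤ b') (hab : b < 2 * a) (hab' : b' < 2 * a')
    (hYb : ∀ y ∈ D, f y = true → a ≤ φ (pEval p y))
    (hNb : ∀ y ∈ D, f y = false → φ (pEval p y) ≤ -a')
    (hLb : ∀ y : Fin M → Bool, -b ≤ φ (pEval p y))
    (hHb : ∀ y : Fin M → Bool, φ (pEval p y) ≤ b')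
    (hq : ∀ x, pEval q x = ∑ i : Fin m, φ (pEval p (block x i))) :
    SignRep (gapMajDom D f m (2/3)) (gapMajFun D f m (2/3)) q := by
  classical
  intro x hx
  have hx' : (2/3 : ℝ) * m ≤ (gmYes D f x : ℝ) ∨ (2/3 : ℝ) * m ≤ (gmNo D f x : ℝ) := hx
  set v : Fin m → ℝ := fun i => φ (pEval p (block x i)) with hv
  have hmR : (1 : ℝ) ≤ (m : ℝ) := by exact_mod_cast hm
  constructor
  · intro ht
    have hcond : (2/3 : ℝ) * m ≤ (gmYes D f x : ℝ) := by
      by_contra h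
      simp only [gapMajFun, if_neg h] at ht
      exact Bool.false_ne_true ht
    set P : Fin m → Prop := fun i => block x i ∈ D ∧ f (block x i) = true with hPdef
    set Y : Finset (Fin m) := Finset.univ.filter P with hYdef
    set Z : Finset (Fin m) := Finset.univ.filter (fun i => ¬ P i) with hZdef
    have hYcard : (gmYes D f x : ℝ) = (Y.card : ℝ) := by
      rw [gmYes, gm_counts]
    have hsplit : ∑ i, v i = (∑ i ∈ Y, v i) + ∑ i ∈ Z, v i :=
      (Finset.sum_filter_add_sum_filter_not Finset.univ P v).symm
    have h1 : (Y.card : ℝ) * a ≤ ∑ i ∈ Y, v i := by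
      have := Finset.card_nsmul_le_sum Y v a (fun i hi => by
        have hPi : P i := (Finset.mem_filter.1 hi).2
        exact hYb _ hPi.1 hPi.2)
      simpa [nsmul_eq_mul] using this
    have h2 : (Z.card : ℝ) * (-b) ≤ ∑ i ∈ Z, v i := by
      have := Finset.card_nsmul_le_sum Z v (-b) (fun i _ => hLb (block x i))
      simpa [nsmul_eq_mul] using this
    have hcards : Y.card + Z.card = m := by
      rw [hYdef, hZdef, Finset.card_filter_add_card_filter_not]
      simp
    have hcardsR : (Y.card : ℝ) + (Z.card : ℝ) = (m : ℝ) := by exact_mod_cast hcards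
    have hge : (2/3 : ℝ) * m ≤ (Y.card : ℝ) := hYcard ▸ hcond
    have hkpos : 0 < (Y.card : ℝ) := by linarith
    have hk2 : (Z.card : ℝ) ≤ (Y.card : ℝ) / 2 := by linarith
    have hpos : 0 < (Y.card : ℝ) * a - (Z.card : ℝ) * b := by
      nlinarith [mul_pos hkpos (by linarith : (0:ℝ) < 2 * a - b),
        mul_le_mul_of_nonneg_right hk2 hb0]
    rw [hq x]
    calc (0:ℝ) < (Y.card : ℝ) * a - (Z.card : ℝ) * b := hpos
      _ ≤ (∑ i ∈ Y, v i) + ∑ i ∈ Z, v i := by nlinarith [h1, h2]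
      _ = ∑ i, v i := hsplit.symm
  · intro ht
    have hnotyes : ¬ ((2/3 : ℝ) * m ≤ (gmYes D f x : ℝ)) := by
      intro h
      simp only [gapMajFun, if_pos h] at ht
      simp at ht
    have hcond : (2/3 : ℝ) * m ≤ (gmNo D f x : ℝ) := hx'.resolve_left hnotyes
    set P : Fin m → Prop := fun i => block x i ∈ D ∧ f (block x i) = false with hPdef
    set Y : Finset (Fin m) := Finset.univ.filter P with hYdef
    set Z : Finset (Fin m) := Finset.univ.filter (fun i => ¬ P i) with hZdef
    have hYcard : (gmNo D f x : ℝ) = (Y.card : ℝ) := by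
      rw [gmNo, gm_counts]
    have hsplit : ∑ i, v i = (∑ i ∈ Y, v i) + ∑ i ∈ Z, v i :=
      (Finset.sum_filter_add_sum_filter_not Finset.univ P v).symm
    have h1 : ∑ i ∈ Y, v i ≤ (Y.card : ℝ) * (-a') := by
      have := Finset.sum_le_card_nsmul Y v (-a') (fun i hi => by
        have hPi : P i := (Finset.mem_filter.1 hi).2
        exact hNb _ hPi.1 hPi.2)
      simpa [nsmul_eq_mul] using this
    have h2 : ∑ i ∈ Z, v i ≤ (Z.card : ℝ) * b' := by
      have := Finset.sum_le_card_nsmul Z v b' (fun i _ => hHb (block x i))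
      simpa [nsmul_eq_mul] using this
    have hcards : Y.card + Z.card = m := by
      rw [hYdef, hZdef, Finset.card_filter_add_card_filter_not]
      simp
    have hcardsR : (Y.card : ℝ) + (Z.card : ℝ) = (m : ℝ) := by exact_mod_cast hcards
    have hge : (2/3 : ℝ) * m ≤ (Y.card : ℝ) := hYcard ▸ hcond
    have hkpos : 0 < (Y.card : ℝ) := by linarith
    have hk2 : (Z.card : ℝ) ≤ (Y.card : ℝ) / 2 := by linarith
    have hneg : (Y.card : ℝ) * (-a') + (Z.card : ℝ) * b' < 0 := by
      nlinarith [mul_pos hkpos (by linarith : (0:ℝ) < 2 * a' - b'),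
        mul_le_mul_of_nonneg_right hk2 hb0']
    rw [hq x]
    calc ∑ i, v i = (∑ i ∈ Y, v i) + ∑ i ∈ Z, v i := hsplit
      _ ≤ (Y.card : ℝ) * (-a') + (Z.card : ℝ) * b' := by linarith
      _ < 0 := hneg
end SignRepLemma
section Constructions

/-! Real amplification map. -/

def stepR (u : ℝ) : ℝ := (3*u - u^3)/2

lemma step_mem {u : ℝ} (h1 : -1 ≤ u) (h2 : u ≤ 1) : -1 ≤ stepR u ∧ stepR u ≤ 1 := by
  unfold stepR
  constructor
  · nlinarith [mul_nonneg (sq_nonneg (1+u)) (by linarith : (0:ℝ) ≤ 2 - u)]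
  · nlinarith [mul_nonneg (sq_nonneg (1-u)) (by linarith : (0:ℝ) ≤ u + 2)]

lemma step_chain {c c' : ℝ} (h0 : 0 ≤ c) (hc : c' ≤ (3*c - c^3)/2) {u : ℝ}
    (hcu : c ≤ u) (hu : u ≤ 1) : c' ≤ stepR u ∧ stepR u ≤ 1 := by
  have h1 : (3*c - c^3)/2 ≤ stepR u := by
    have := mul_nonneg (sub_nonneg.2 hcu) (show (0:ℝ) ≤ 3 - (u^2 + u*c + c^2) by nlinarith)
    unfold stepR; nlinarith
  exact ⟨le_trans hc h1, (step_mem (by linarith) hu).2⟩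

lemma step_odd (u : ℝ) : stepR (-u) = - stepR u := by unfold stepR; ring

lemma iter_odd (n : ℕ) (u : ℝ) : stepR^[n] (-u) = - stepR^[n] u := by
  induction n with
  | zero => simp
  | succ k ih => rw [Function.iterate_succ_apply', Function.iterate_succ_apply', ih, step_odd]

lemma iter_mem (n : ℕ) {u : ℝ} (h1 : -1 ≤ u) (h2 : u ≤ 1) :
    -1 ≤ stepR^[n] u ∧ stepR^[n] u ≤ 1 := by
  induction n with
  | zero => exact ⟨h1, h2⟩
  | succ k ih => rw [Function.iterate_succ_apply']; exact step_mem ih.1 ih.2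

lemma iter5_lb {u : ℝ} (h1 : 1/11 ≤ u) (h2 : u ≤ 1) :
    14/25 ≤ stepR^[5] u ∧ stepR^[5] u ≤ 1 := by
  have s1 := step_chain (by norm_num) (by norm_num : (13:ℝ)/100 ≤ (3*(1/11) - (1/11)^3)/2) h1 h2
  have s2 := step_chain (by norm_num) (by norm_num : (19:ℝ)/100 ≤ (3*(13/100) - (13/100)^3)/2) s1.1 s1.2
  have s3 := step_chain (by norm_num) (by norm_num : (28:ℝ)/100 ≤ (3*(19/100) - (19/100)^3)/2) s2.1 s2.2
  have s4 := step_chain (by norm_num) (by norm_num : (2:ℝ)/5 ≤ (3*(28/100) - (28/100)^3)/2) s3.1 s3.2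
  have s5 := step_chain (by norm_num) (by norm_num : (14:ℝ)/25 ≤ (3*(2/5) - (2/5)^3)/2) s4.1 s4.2
  show 14/25 ≤ stepR (stepR (stepR (stepR (stepR u)))) ∧ _
  exact s5

/-! The quadratic correction `φ₁` for the `1/20`-error construction. -/

def phi1 (t : ℝ) : ℝ := (2*t - 1) + (1/6)*(2*t - 1)^2

lemma phi1_yes {t : ℝ} (h : |t - 1| ≤ 1/20) : 207/200 ≤ phi1 t := by
  rw [abs_le] at h; unfold phi1; nlinarith [sq_nonneg (t - 19/20)]

lemma phi1_no {t : ℝ} (h : |t| ≤ 1/20) : phi1 t ≤ -(153/200) := by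
  rw [abs_le] at h; unfold phi1; nlinarith [sq_nonneg (t + 1/20)]

lemma phi1_lb (t : ℝ) : -(3/2) ≤ phi1 t := by
  unfold phi1; nlinarith [sq_nonneg (2*t + 2)]

lemma phi1_ub {t : ℝ} (h : |t| ≤ 21/20) : phi1 t ≤ 781/600 := by
  rw [abs_le] at h; unfold phi1
  nlinarith [mul_nonneg (by linarith : (0:ℝ) ≤ 21/20 - t) (by linarith : (0:ℝ) ≤ t + 21/20)]

/-! The amplified map `φ₂` for the `1/3`-error construction. -/

def phi2 (t : ℝ) : ℝ := stepR^[5] ((3/11) * (2*t - 1))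

lemma phi2_yes {t : ℝ} (h : |t - 1| ≤ 1/3) : 14/25 ≤ phi2 t := by
  rw [abs_le] at h
  exact (iter5_lb (by linarith : 1/11 ≤ (3/11) * (2*t-1))
    (by linarith : (3/11) * (2*t-1) ≤ 1)).1

lemma phi2_no {t : ℝ} (h : |t| ≤ 1/3) : phi2 t ≤ -(14/25) := by
  rw [abs_le] at h
  have hodd := iter_odd 5 (-((3/11) * (2*t-1)))
  rw [neg_neg] at hodd
  have hlb := (iter5_lb (by linarith : 1/11 ≤ -((3/11) * (2*t-1)))
    (by linarith : -((3/11) * (2*t-1)) ≤ 1)).1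
  unfold phi2
  rw [hodd]
  linarith

lemma phi2_bounds {t : ℝ} (h : |t| ≤ 4/3) : -1 ≤ phi2 t ∧ phi2 t ≤ 1 := by
  rw [abs_le] at h
  exact iter_mem 5 (by linarith : -1 ≤ (3/11) * (2*t-1)) (by linarith)

/-! Polynomial versions and their evaluation / degree properties. -/

def stepP {τ : Type*} (t : MvPolynomial τ ℝ) : MvPolynomial τ ℝ :=
  C (1/2 : ℝ) * (C 3 * t - t^3)

lemma pEval_stepP {τ : Type*} (t : MvPolynomial τ ℝ) (x : τ → Bool) :
    pEval (stepP t) x = stepR (pEval t x) := by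
  simp [pEval, stepP, stepR]; ring

lemma pEval_stepP_iter {τ : Type*} (n : ℕ) (t : MvPolynomial τ ℝ) (x : τ → Bool) :
    pEval (stepP^[n] t) x = stepR^[n] (pEval t x) := by
  induction n with
  | zero => rfl
  | succ k ih =>
      rw [Function.iterate_succ_apply', Function.iterate_succ_apply', pEval_stepP, ih]

lemma stepP_deg {τ : Type*} (t : MvPolynomial τ ℝ) :
    (stepP t).totalDegree ≤ 3 * t.totalDegree := by
  unfold stepP
  calc (C (1/2:ℝ) * (C 3 * t - t^3)).totalDegree
      ≤ (C (1/2:ℝ)).totalDegree + (C 3 * t - t^3).totalDegree := totalDegree_mul _ _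
    _ = (C 3 * t - t^3).totalDegree := by rw [totalDegree_C, zero_add]
    _ ≤ max (C 3 * t).totalDegree (t^3).totalDegree := totalDegree_sub _ _
    _ ≤ 3 * t.totalDegree := by
        apply max_le
        · calc (C 3 * t).totalDegree ≤ (C (3:ℝ)).totalDegree + t.totalDegree :=
              totalDegree_mul _ _
            _ = t.totalDegree := by rw [totalDegree_C, zero_add]
            _ ≤ 3 * t.totalDegree := Nat.le_mul_of_pos_left _ (by norm_num)
        · exact totalDegree_pow _ _

lemma stepP_iter_deg {τ : Type*} (n : ℕ) (t : MvPolynomial τ ℝ) :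
    (stepP^[n] t).totalDegree ≤ 3 ^ n * t.totalDegree := by
  induction n with
  | zero => simp
  | succ k ih =>
      rw [Function.iterate_succ_apply']
      calc (stepP (stepP^[k] t)).totalDegree ≤ 3 * (stepP^[k] t).totalDegree := stepP_deg _
        _ ≤ 3 * (3 ^ k * t.totalDegree) := by omega
        _ = 3 ^ (k+1) * t.totalDegree := by ring

/-- The affine per-block polynomial `2·p_i − 1`. -/
def affP {M m : ℕ} (p : MvPolynomial (Fin M) ℝ) (i : Fin m) :
    MvPolynomial (Fin m × Fin M) ℝ :=
  C 2 * rename (Prod.mk i) p - 1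

lemma pEval_affP {M m : ℕ} (p : MvPolynomial (Fin M) ℝ) (i : Fin m)
    (x : Fin m × Fin M → Bool) :
    pEval (affP p i) x = 2 * pEval p (block x i) - 1 := by
  have h := pEval_rename p i x
  simp only [affP, pEval, map_sub, map_mul, map_one, eval_C] at *
  rw [h]

lemma affP_deg {M m : ℕ} (p : MvPolynomial (Fin M) ℝ) (i : Fin m) :
    (affP p i).totalDegree ≤ p.totalDegree := by
  unfold affP
  calc (C 2 * rename (Prod.mk i) p - 1).totalDegree
      ≤ max (C 2 * rename (Prod.mk i) p).totalDegree (1 : MvPolynomial _ ℝ).totalDegree :=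
        totalDegree_sub _ _
    _ ≤ p.totalDegree := by
        apply max_le
        · calc (C 2 * rename (Prod.mk i) p).totalDegree
              ≤ (C (2:ℝ)).totalDegree + (rename (Prod.mk i) p).totalDegree := totalDegree_mul _ _
            _ = (rename (Prod.mk i) p).totalDegree := by rw [totalDegree_C, zero_add]
            _ ≤ p.totalDegree := totalDegree_rename_le _ _
        · simp [totalDegree_one]

end Constructions
section Parts

lemma part1 {M m : ℕ} (hm : 1 ≤ m) (D : Set (Fin M → Bool)) (f : (Fin M → Bool) → Bool) :
    thrDeg (gapMajDom D f m (2/3)) (gapMajFun D f m (2/3)) ≤ 2 * adeg D f (1/20) := by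
  classical
  obtain ⟨p, hap, hdeg⟩ := adeg_attained D f (by norm_num : (0:ℝ) ≤ 1/20)
  set q : MvPolynomial (Fin m × Fin M) ℝ :=
    ∑ i : Fin m, (affP p i + C (1/6 : ℝ) * (affP p i)^2) with hqdef
  have hqeval : ∀ x, pEval q x = ∑ i : Fin m, phi1 (pEval p (block x i)) := by
    intro x
    rw [hqdef, pEval_sum]
    refine Finset.sum_congr rfl (fun i _ => ?_)
    have h := pEval_affP p i x
    simp only [pEval, map_add, map_mul, map_pow, eval_C] at h ⊢
    rw [h]
    unfold phi1; ring
  have hsign : SignRep (gapMajDom D f m (2/3)) (gapMajFun D f m (2/3)) q := by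
    refine signrep_blockwise hm D f p phi1 q
      (a := 207/200) (a' := 153/200) (b := 3/2) (b' := 781/600)
      (by norm_num) (by norm_num) (by norm_num) (by norm_num) (by norm_num) (by norm_num)
      ?_ ?_ (fun y => phi1_lb _) ?_ hqeval
    · intro y hy hfy
      have h1 := hap.1 y hy
      rw [hfy] at h1
      simp only [bval, if_pos rfl] at h1
      exact phi1_yes h1
    · intro y hy hfy
      have h1 := hap.1 y hy
      rw [hfy] at h1
      simp only [bval, Bool.false_eq_true, if_neg, sub_zero] at h1
      exact phi1_no (by simpa using h1)
    · intro y
      have h1 := approx_all_bound hap y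
      exact phi1_ub (by norm_num at h1 ⊢; linarith [abs_le.1 h1] )
  have hterm : ∀ i : Fin m,
      (affP p i + C (1/6:ℝ) * (affP p i)^2).totalDegree ≤ 2 * p.totalDegree := by
    intro i
    have h0 := affP_deg p i
    have h2 : ((affP p i)^2).totalDegree ≤ 2 * (affP p i).totalDegree := totalDegree_pow _ _
    have h3 := totalDegree_mul (C (1/6:ℝ)) ((affP p i)^2)
    have h4 : (C (1/6:ℝ) : MvPolynomial (Fin m × Fin M) ℝ).totalDegree = 0 := totalDegree_C _
    have h5 := totalDegree_add (affP p i) (C (1/6:ℝ) * (affP p i)^2)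
    refine le_trans h5 (max_le ?_ ?_) <;> omega
  have hqdeg : q.totalDegree ≤ 2 * p.totalDegree := by
    rw [hqdef]
    exact le_trans (totalDegree_finset_sum _ _) (Finset.sup_le (fun i _ => hterm i))
  have h1 : thrDeg (gapMajDom D f m (2/3)) (gapMajFun D f m (2/3)) ≤ q.totalDegree :=
    Nat.sInf_le ⟨q, hsign, rfl⟩
  calc thrDeg (gapMajDom D f m (2/3)) (gapMajFun D f m (2/3)) ≤ q.totalDegree := h1
    _ ≤ 2 * p.totalDegree := hqdeg
    _ = 2 * adeg D f (1/20) := by rw [hdeg]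

lemma part2 {M m : ℕ} (hm : 1 ≤ m) (D : Set (Fin M → Bool)) (f : (Fin M → Bool) → Bool) :
    thrDeg (gapMajDom D f m (2/3)) (gapMajFun D f m (2/3)) ≤ 243 * adeg D f (1/3) := by
  classical
  obtain ⟨p, hap, hdeg⟩ := adeg_attained D f (by norm_num : (0:ℝ) ≤ 1/3)
  set q : MvPolynomial (Fin m × Fin M) ℝ :=
    ∑ i : Fin m, stepP^[5] (C (3/11 : ℝ) * affP p i) with hqdef
  have hbase : ∀ (i : Fin m) (x : Fin m × Fin M → Bool),
      pEval (C (3/11 : ℝ) * affP p i) x = (3/11) * (2 * pEval p (block x i) - 1) := by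
    intro i x
    have h := pEval_affP p i x
    simp only [pEval, map_mul, eval_C] at h ⊢
    rw [h]
  have hqeval : ∀ x, pEval q x = ∑ i : Fin m, phi2 (pEval p (block x i)) := by
    intro x
    rw [hqdef, pEval_sum]
    refine Finset.sum_congr rfl (fun i _ => ?_)
    rw [pEval_stepP_iter, hbase]
    rfl
  have hsign : SignRep (gapMajDom D f m (2/3)) (gapMajFun D f m (2/3)) q := by
    refine signrep_blockwise hm D f p phi2 q
      (a := 14/25) (a' := 14/25) (b := 1) (b' := 1)
      (by norm_num) (by norm_num) (by norm_num) (by norm_num) (by norm_num) (by norm_num)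
      ?_ ?_ ?_ ?_ hqeval
    · intro y hy hfy
      have h1 := hap.1 y hy
      rw [hfy] at h1
      simp only [bval, if_pos rfl] at h1
      exact phi2_yes h1
    · intro y hy hfy
      have h1 := hap.1 y hy
      rw [hfy] at h1
      simp only [bval, Bool.false_eq_true, if_neg, sub_zero] at h1
      exact phi2_no (by simpa using h1)
    · intro y
      have h1 := approx_all_bound hap y
      exact (phi2_bounds (by norm_num at h1 ⊢; linarith [abs_le.1 h1])).1
    · intro y
      have h1 := approx_all_bound hap y
      exact (phi2_bounds (by norm_num at h1 ⊢; linarith [abs_le.1 h1])).2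
  have hterm : ∀ i : Fin m,
      (stepP^[5] (C (3/11 : ℝ) * affP p i)).totalDegree ≤ 243 * p.totalDegree := by
    intro i
    have h0 : (C (3/11 : ℝ) * affP p i).totalDegree ≤ p.totalDegree := by
      have := totalDegree_mul (C (3/11:ℝ)) (affP p i)
      have h4 : (C (3/11:ℝ) : MvPolynomial (Fin m × Fin M) ℝ).totalDegree = 0 := totalDegree_C _
      have := affP_deg p i
      omega
    have h1 := stepP_iter_deg 5 (C (3/11 : ℝ) * affP p i)
    have : (3:ℕ)^5 = 243 := by norm_num
    omega
  have hqdeg : q.totalDegree ≤ 243 * p.totalDegree := by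
    rw [hqdef]
    exact le_trans (totalDegree_finset_sum _ _) (Finset.sup_le (fun i _ => hterm i))
  have h1 : thrDeg (gapMajDom D f m (2/3)) (gapMajFun D f m (2/3)) ≤ q.totalDegree :=
    Nat.sInf_le ⟨q, hsign, rfl⟩
  calc thrDeg (gapMajDom D f m (2/3)) (gapMajFun D f m (2/3)) ≤ q.totalDegree := h1
    _ ≤ 243 * p.totalDegree := hqdeg
    _ = 243 * adeg D f (1/3) := by rw [hdeg]

end Parts

/-- The threshold degree of `GapMaj_{m,2/3}(f)` is at most twice the
`1/20`-approximate degree of `f`; consequently it is `O(adeg_{1/3}(f))`. -/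
theorem stmt7 :
    ∃ C : ℝ, 0 < C ∧
      ∀ (M : ℕ) (D : Set (Fin M → Bool)) (f : (Fin M → Bool) → Bool) (m : ℕ), 1 ≤ m →
        thrDeg (gapMajDom D f m (2/3)) (gapMajFun D f m (2/3)) ≤ 2 * adeg D f (1/20) ∧
        (thrDeg (gapMajDom D f m (2/3)) (gapMajFun D f m (2/3)) : ℝ)
          ≤ C * adeg D f (1/3) := by
  refine ⟨243, by norm_num, fun M D f m hm => ⟨part1 hm D f, ?_⟩⟩
  have h := part2 hm D f
  calc (thrDeg (gapMajDom D f m (2/3)) (gapMajFun D f m (2/3)) : ℝ)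
      ≤ ((243 * adeg D f (1/3) : ℕ) : ℝ) := by exact_mod_cast h
    _ = 243 * adeg D f (1/3) := by push_cast; ring
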